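/- arXiv:1012.2448 — 8 statements merged into one kernel-verified Lean document; each statement's English description precedes it below -/
import Mathlib

section
/- Let n > 1 be even. The equation tan(nx) = n·tan(x) has exactly n/2 - 1 solutions in (0, π/2), and each such solution ξ lies in an interval (2kπ/(2n), (2k+1)π/(2n)) for some k with 1 ≤ k ≤ n/2 - 1. -/
open Real

noncomputable def phiAux (n k : ℕ) (x : ℝ) : ℝ := n * x - k * π - arctan (n * Real.tan x)

lemma hasDerivAt_phiAux (n k : ℕ) (x : ℝ) (hc : Real.cos x ≠ 0) :
    HasDerivAt (phiAux n k)
      ((n : ℝ) - (1 / (1 + ((n : ℝ) * Real.tan x) ^ 2)) * ((n : ℝ) * (1 / Real.cos x ^ 2))) x := by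
  have h1 : HasDerivAt Real.tan (1 / Real.cos x ^ 2) x := Real.hasDerivAt_tan hc
  have h2 : HasDerivAt (fun y => (n : ℝ) * Real.tan y) ((n : ℝ) * (1 / Real.cos x ^ 2)) x :=
    h1.const_mul _
  have h3 : HasDerivAt (fun y => arctan ((n : ℝ) * Real.tan y))
      ((1 / (1 + ((n : ℝ) * Real.tan x) ^ 2)) * ((n : ℝ) * (1 / Real.cos x ^ 2))) x :=
    (Real.hasDerivAt_arctan _).comp x h2
  have h4 : HasDerivAt (fun y => (n : ℝ) * y - (k : ℝ) * π) (n : ℝ) x := by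
    simpa using ((hasDerivAt_id x).const_mul (n : ℝ)).sub_const ((k : ℝ) * π)
  exact h4.sub h3

lemma bounds_mem (n k : ℕ) (hn : 0 < n) (hk : 2 * k + 1 < n) {x : ℝ}
    (hx : x ∈ Set.Icc ((k : ℝ) * π / n) ((2 * (k : ℝ) + 1) * π / (2 * n))) :
    0 ≤ x ∧ x < π / 2 := by
  have hπ := Real.pi_pos
  have hn' : (0 : ℝ) < n := by exact_mod_cast hn
  have hk' : (2 * (k : ℝ) + 1) < n := by exact_mod_cast hk
  constructor
  · have : (0 : ℝ) ≤ (k : ℝ) * π / n := by positivity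
    linarith [hx.1]
  · have : (2 * (k : ℝ) + 1) * π / (2 * n) < π / 2 := by
      rw [div_lt_div_iff₀ (by positivity) (by norm_num)]
      nlinarith
    linarith [hx.2]

lemma cos_ne_zero_of_mem (x : ℝ) (h0 : 0 ≤ x) (h2 : x < π / 2) : Real.cos x ≠ 0 := by
  have := Real.pi_pos
  exact (Real.cos_pos_of_mem_Ioo ⟨by linarith, h2⟩).ne'

lemma phiAux_strictMono (n k : ℕ) (hn : 1 < n) (hk : 2 * k + 1 < n) :
    StrictMonoOn (phiAux n k) (Set.Icc ((k : ℝ) * π / n) ((2 * (k : ℝ) + 1) * π / (2 * n))) := by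
  have hn0 : 0 < n := by omega
  apply strictMonoOn_of_deriv_pos (convex_Icc _ _)
  · intro x hx
    obtain ⟨h0, h2⟩ := bounds_mem n k hn0 hk hx
    exact (hasDerivAt_phiAux n k x (cos_ne_zero_of_mem x h0 h2)).continuousAt.continuousWithinAt
  · intro x hx
    rw [interior_Icc] at hx
    have hmem : x ∈ Set.Icc ((k : ℝ) * π / n) ((2 * (k : ℝ) + 1) * π / (2 * n)) :=
      ⟨hx.1.le, hx.2.le⟩
    obtain ⟨h0, h2⟩ := bounds_mem n k hn0 hk hmem
    have hπ := Real.pi_pos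
    have hn' : (0 : ℝ) < n := by exact_mod_cast hn0
    have hxpos : 0 < x := lt_of_le_of_lt (by positivity) hx.1
    have hc : Real.cos x ≠ 0 := cos_ne_zero_of_mem x h0 h2
    rw [(hasDerivAt_phiAux n k x hc).deriv]
    have ht : 0 < Real.tan x := Real.tan_pos_of_pos_of_lt_pi_div_two hxpos h2
    have hinv : (1 + Real.tan x ^ 2)⁻¹ = Real.cos x ^ 2 := Real.inv_one_add_tan_sq hc
    have hcos2 : (0 : ℝ) < Real.cos x ^ 2 := by
      have := Real.cos_pos_of_mem_Ioo (show x ∈ Set.Ioo (-(π/2)) (π/2) from ⟨by linarith, h2⟩)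
      positivity
    have hcos : 1 / Real.cos x ^ 2 = 1 + Real.tan x ^ 2 := by
      rw [← hinv]; field_simp
    rw [hcos]
    set t := Real.tan x with htdef
    have hA : (0 : ℝ) < 1 + ((n : ℝ) * t) ^ 2 := by positivity
    rw [sub_pos, one_div, ← div_eq_inv_mul, div_lt_iff₀ hA]
    have hn2 : (2 : ℝ) ≤ (n : ℝ) := by exact_mod_cast hn
    have hnsq : (1 : ℝ) < (n : ℝ) ^ 2 := by nlinarith
    have h5 : t ^ 2 < ((n : ℝ) * t) ^ 2 := by
      have := mul_lt_mul_of_pos_right hnsq (mul_pos ht ht)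
      nlinarith
    nlinarith [mul_lt_mul_of_pos_left h5 hn']

lemma phiAux_continuousOn (n k : ℕ) (hn : 1 < n) (hk : 2 * k + 1 < n) :
    ContinuousOn (phiAux n k) (Set.Icc ((k : ℝ) * π / n) ((2 * (k : ℝ) + 1) * π / (2 * n))) := by
  intro x hx
  obtain ⟨h0, h2⟩ := bounds_mem n k (by omega) hk hx
  exact (hasDerivAt_phiAux n k x (cos_ne_zero_of_mem x h0 h2)).continuousAt.continuousWithinAt

/-- A solution in the k-th interval is a zero of phiAux. -/
lemma phi_zero_of_sol (n k : ℕ) {x : ℝ}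
    (hl : (k : ℝ) * π < n * x) (hr : (n : ℝ) * x < k * π + π / 2)
    (heq : Real.tan (n * x) = n * Real.tan x) : phiAux n k x = 0 := by
  have h1 : Real.tan ((n : ℝ) * x - k * π) = Real.tan ((n : ℝ) * x) :=
    Real.tan_sub_nat_mul_pi _ k
  have h2 : arctan (Real.tan ((n : ℝ) * x - k * π)) = (n : ℝ) * x - k * π := by
    apply Real.arctan_tan
    · have := Real.pi_pos; linarith
    · linarith
  unfold phiAux
  rw [← heq, ← h1, h2]
  ring

lemma sol_of_phi_zero (n k : ℕ) {x : ℝ}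
    (hl : (k : ℝ) * π < n * x) (hr : (n : ℝ) * x < k * π + π / 2)
    (hphi : phiAux n k x = 0) : Real.tan (n * x) = n * Real.tan x := by
  have h1 : (n : ℝ) * x - k * π = arctan ((n : ℝ) * Real.tan x) := by
    unfold phiAux at hphi; linarith
  have h2 : Real.tan ((n : ℝ) * x - k * π) = Real.tan ((n : ℝ) * x) :=
    Real.tan_sub_nat_mul_pi _ k
  rw [← h2, h1, Real.tan_arctan]


lemma mem_interval_iff (n k : ℕ) (hn0 : 0 < n) (x : ℝ) :
    x ∈ Set.Ioo ((k : ℝ) * π / n) ((2 * (k : ℝ) + 1) * π / (2 * n)) ↔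
      ((k : ℝ) * π < n * x ∧ (n : ℝ) * x < k * π + π / 2) := by
  have hn' : (0 : ℝ) < n := by exact_mod_cast hn0
  rw [Set.mem_Ioo, div_lt_iff₀ hn', lt_div_iff₀ (by positivity)]
  constructor <;> rintro ⟨u, v⟩ <;> constructor <;> nlinarith

lemma cos_n_ne (n k : ℕ) {x : ℝ} (hl : (k : ℝ) * π < n * x)
    (hr : (n : ℝ) * x < k * π + π / 2) : Real.cos ((n : ℝ) * x) ≠ 0 := by
  intro h
  obtain ⟨j, hj⟩ := Real.cos_eq_zero_iff.1 h
  have hπ := Real.pi_pos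
  rw [hj] at hl hr
  have h1 : (2 * (k : ℝ)) < 2 * j + 1 := by nlinarith
  have h2 : (2 * (j : ℝ) + 1) < 2 * k + 1 := by nlinarith
  have h1' : 2 * (k : ℤ) < 2 * j + 1 := by exact_mod_cast h1
  have h2' : 2 * (j : ℤ) + 1 < 2 * k + 1 := by exact_mod_cast h2
  omega

lemma exists_sol (n k : ℕ) (hn : 1 < n) (hk1 : 1 ≤ k) (hk : 2 * k + 1 < n) :
    ∃ x : ℝ, x ∈ Set.Ioo ((k : ℝ) * π / n) ((2 * (k : ℝ) + 1) * π / (2 * n)) ∧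
      Real.tan ((n : ℝ) * x) = n * Real.tan x := by
  have hπ := Real.pi_pos
  have hn0 : 0 < n := by omega
  have hn' : (0 : ℝ) < n := by exact_mod_cast hn0
  have hk1' : (1 : ℝ) ≤ (k : ℝ) := by exact_mod_cast hk1
  have hk' : 2 * (k : ℝ) + 1 < n := by exact_mod_cast hk
  set a : ℝ := (k : ℝ) * π / n with ha
  set b : ℝ := (2 * (k : ℝ) + 1) * π / (2 * n) with hb
  have hab : a ≤ b := by
    rw [ha, hb, div_le_div_iff₀ (by positivity) (by positivity)]
    nlinarith
  have hna : (n : ℝ) * a = k * π := by rw [ha]; field_simp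
  have hnb : (n : ℝ) * b = k * π + π / 2 := by rw [hb]; field_simp
  have ha0 : 0 < a := by positivity
  have ha2 : a < π / 2 := (bounds_mem n k hn0 hk ⟨le_refl _, hab⟩).2
  have hta : 0 < Real.tan a := Real.tan_pos_of_pos_of_lt_pi_div_two ha0 ha2
  have hphia : phiAux n k a < 0 := by
    unfold phiAux
    rw [hna]
    have : 0 < arctan ((n : ℝ) * Real.tan a) := by
      rw [← Real.arctan_zero]
      exact Real.arctan_strictMono (by positivity)
    linarith
  have hphib : 0 < phiAux n k b := by
    unfold phiAux
    rw [hnb]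
    have := Real.arctan_lt_pi_div_two ((n : ℝ) * Real.tan b)
    linarith
  have hsub := intermediate_value_Ioo hab (phiAux_continuousOn n k hn hk)
  have h0 : (0 : ℝ) ∈ Set.Ioo (phiAux n k a) (phiAux n k b) := ⟨hphia, hphib⟩
  obtain ⟨x, hx, hphix⟩ := hsub h0
  refine ⟨x, hx, ?_⟩
  have hbd := (mem_interval_iff n k hn0 x).1 hx
  exact sol_of_phi_zero n k hbd.1 hbd.2 hphix

lemma localize (n : ℕ) (hn : 1 < n) (he : Even n) {ξ : ℝ} (h1 : ξ ∈ Set.Ioo 0 (π / 2))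
    (heq : Real.tan ((n : ℝ) * ξ) = n * Real.tan ξ) :
    ∃ k : ℕ, 1 ≤ k ∧ k ≤ n / 2 - 1 ∧ (k : ℝ) * π < n * ξ ∧ (n : ℝ) * ξ < k * π + π / 2 := by
  have hπ := Real.pi_pos
  have hn0 : 0 < n := by omega
  have hn' : (0 : ℝ) < n := by exact_mod_cast hn0
  have ht : 0 < Real.tan ξ := Real.tan_pos_of_pos_of_lt_pi_div_two h1.1 h1.2
  have htn : 0 < Real.tan ((n : ℝ) * ξ) := by rw [heq]; positivity
  set j : ℤ := ⌊(n : ℝ) * ξ / π⌋ with hjdef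
  have hj1 : (j : ℝ) * π ≤ (n : ℝ) * ξ := by
    have := Int.floor_le ((n : ℝ) * ξ / π)
    rw [← hjdef] at this
    calc (j : ℝ) * π ≤ ((n : ℝ) * ξ / π) * π := by nlinarith
    _ = (n : ℝ) * ξ := by field_simp
  have hj2 : (n : ℝ) * ξ < (j + 1) * π := by
    have := Int.lt_floor_add_one ((n : ℝ) * ξ / π)
    rw [← hjdef] at this
    calc (n : ℝ) * ξ = ((n : ℝ) * ξ / π) * π := by field_simp
    _ < ((j : ℝ) + 1) * π := by nlinarith
  set θ : ℝ := (n : ℝ) * ξ - j * π with hθdef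
  have hθ1 : 0 ≤ θ := by rw [hθdef]; linarith
  have hθ2 : θ < π := by rw [hθdef]; linarith [hj2]
  have htθ : Real.tan θ = Real.tan ((n : ℝ) * ξ) := Real.tan_sub_int_mul_pi _ j
  have hθpos : 0 < θ := by
    rcases lt_or_eq_of_le hθ1 with h | h
    · exact h
    · exfalso; rw [← h] at htθ; rw [← htθ] at htn; simp at htn
  have hθhalf : θ < π / 2 := by
    by_contra hcon
    push_neg at hcon
    rcases lt_or_eq_of_le hcon with h | h
    · have h' : θ - π < 0 := by linarith
      have h'' : -(π / 2) < θ - π := by linarith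
      have := Real.tan_neg_of_neg_of_pi_div_two_lt h' h''
      rw [Real.tan_sub_pi] at this
      linarith [htθ ▸ htn]
    · rw [← h] at htθ
      rw [Real.tan_pi_div_two] at htθ
      linarith [htθ ▸ htn]
  have hjnn : 0 ≤ j := by
    by_contra hcon
    push_neg at hcon
    have hjle : j ≤ -1 := by omega
    have : (j : ℝ) ≤ -1 := by exact_mod_cast hjle
    have hξpos : 0 < (n : ℝ) * ξ := by have := h1.1; positivity
    nlinarith
  have hjne : j ≠ 0 := by
    intro hj0
    rw [hj0] at hθdef
    simp at hθdef
    have hl0 : ((0 : ℕ) : ℝ) * π < (n : ℝ) * ξ := by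
      simp; rw [hθdef] at hθpos; positivity
    have hr0 : (n : ℝ) * ξ < ((0 : ℕ) : ℝ) * π + π / 2 := by
      simp; rw [← hθdef]; linarith
    have hphi0 : phiAux n 0 ξ = 0 := phi_zero_of_sol n 0 hl0 hr0 heq
    have hk0 : 2 * 0 + 1 < n := by omega
    have hmono := phiAux_strictMono n 0 hn hk0
    have hξle : ξ ≤ (2 * ((0 : ℕ) : ℝ) + 1) * π / (2 * n) := by
      have : (n : ℝ) * ξ < π / 2 := by rw [← hθdef]; linarith
      rw [le_div_iff₀ (by positivity)]
      push_cast
      nlinarith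
    have hmem0 : (0 : ℝ) ∈ Set.Icc (((0 : ℕ) : ℝ) * π / n) ((2 * ((0 : ℕ) : ℝ) + 1) * π / (2 * n)) := by
      constructor
      · simp
      · positivity
    have hmemξ : ξ ∈ Set.Icc (((0 : ℕ) : ℝ) * π / n) ((2 * ((0 : ℕ) : ℝ) + 1) * π / (2 * n)) := by
      constructor
      · simp; linarith [h1.1]
      · exact hξle
    have := hmono hmem0 hmemξ h1.1
    have hphi00 : phiAux n 0 0 = 0 := by simp [phiAux]
    rw [hphi00, hphi0] at this
    exact lt_irrefl _ this
  have hmhalf : ((n / 2 : ℕ) : ℝ) * 2 = (n : ℝ) := by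
    have : n / 2 * 2 = n := Nat.div_mul_cancel he.two_dvd
    exact_mod_cast this
  have hjlt : j < (n / 2 : ℕ) := by
    have hξlt : (n : ℝ) * ξ < ((n / 2 : ℕ) : ℝ) * π := by
      have := h1.2
      nlinarith
    have : (j : ℝ) * π < ((n / 2 : ℕ) : ℝ) * π := by linarith
    have : (j : ℝ) < ((n / 2 : ℕ) : ℝ) := by nlinarith
    have hgoal : ((j : ℝ)) < (((n / 2 : ℕ) : ℤ) : ℝ) := by push_cast; exact this
    exact_mod_cast hgoal
  refine ⟨j.toNat, by omega, by omega, ?_, ?_⟩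
  · have : ((j.toNat : ℤ) : ℝ) = (j : ℝ) := by norm_cast; omega
    push_cast at this ⊢
    rw [this]
    linarith
  · have : ((j.toNat : ℤ) : ℝ) = (j : ℝ) := by norm_cast; omega
    push_cast at this ⊢
    rw [this]
    linarith

theorem stmt_3 (n : ℕ) (hn : 1 < n) (he : Even n) :
    Set.ncard {x : ℝ | x ∈ Set.Ioo 0 (π / 2) ∧ Real.cos x ≠ 0 ∧ Real.cos (n * x) ≠ 0 ∧
        Real.tan (n * x) = n * Real.tan x} = n / 2 - 1 ∧
    ∀ ξ : ℝ, ξ ∈ Set.Ioo 0 (π / 2) → Real.cos ξ ≠ 0 → Real.cos (n * ξ) ≠ 0 →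
      Real.tan (n * ξ) = n * Real.tan ξ →
      ∃ k : ℕ, 1 ≤ k ∧ k ≤ n / 2 - 1 ∧
        ξ ∈ Set.Ioo ((2 * k * π) / (2 * n)) (((2 * k + 1) * π) / (2 * n)) := by
  have hπ := Real.pi_pos
  have hn0 : 0 < n := by omega
  have hn' : (0 : ℝ) < n := by exact_mod_cast hn0
  have h2m : n / 2 * 2 = n := Nat.div_mul_cancel he.two_dvd
  have hsecond : ∀ ξ : ℝ, ξ ∈ Set.Ioo 0 (π / 2) → Real.cos ξ ≠ 0 → Real.cos (n * ξ) ≠ 0 →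
      Real.tan (n * ξ) = n * Real.tan ξ →
      ∃ k : ℕ, 1 ≤ k ∧ k ≤ n / 2 - 1 ∧
        ξ ∈ Set.Ioo ((2 * k * π) / (2 * n)) (((2 * k + 1) * π) / (2 * n)) := by
    intro ξ h1 _ _ heq
    obtain ⟨k, hk1, hk2, hl, hr⟩ := localize n hn he h1 heq
    refine ⟨k, hk1, hk2, ?_⟩
    have hmem := (mem_interval_iff n k hn0 ξ).2 ⟨hl, hr⟩
    have heq1 : (2 * (k : ℝ) * π) / (2 * (n : ℝ)) = (k : ℝ) * π / n := by
      field_simp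
    rw [heq1]
    exact hmem
  refine ⟨?_, hsecond⟩
  have hex : ∀ k, k ∈ Set.Icc 1 (n / 2 - 1) → ∃ x : ℝ,
      x ∈ Set.Ioo ((k : ℝ) * π / n) ((2 * (k : ℝ) + 1) * π / (2 * n)) ∧
      Real.tan ((n : ℝ) * x) = n * Real.tan x := by
    intro k hk
    exact exists_sol n k hn hk.1 (by have := hk.2; omega)
  choose! f hf1 hf2 using hex
  have huniq : ∀ k, 2 * k + 1 < n → ∀ x y : ℝ,
      x ∈ Set.Ioo ((k : ℝ) * π / n) ((2 * (k : ℝ) + 1) * π / (2 * n)) →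
      Real.tan ((n : ℝ) * x) = n * Real.tan x →
      y ∈ Set.Ioo ((k : ℝ) * π / n) ((2 * (k : ℝ) + 1) * π / (2 * n)) →
      Real.tan ((n : ℝ) * y) = n * Real.tan y → x = y := by
    intro k hk2 x y hx hex' hy hey
    have hbx := (mem_interval_iff n k hn0 x).1 hx
    have hby := (mem_interval_iff n k hn0 y).1 hy
    have hpx := phi_zero_of_sol n k hbx.1 hbx.2 hex'
    have hpy := phi_zero_of_sol n k hby.1 hby.2 hey
    exact (phiAux_strictMono n k hn hk2).injOn (Set.Ioo_subset_Icc_self hx)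
      (Set.Ioo_subset_Icc_self hy) (hpx.trans hpy.symm)
  have hSeq : {x : ℝ | x ∈ Set.Ioo 0 (π / 2) ∧ Real.cos x ≠ 0 ∧ Real.cos (n * x) ≠ 0 ∧
      Real.tan (n * x) = n * Real.tan x} = f '' (Set.Icc 1 (n / 2 - 1)) := by
    ext ξ
    simp only [Set.mem_setOf_eq, Set.mem_image]
    constructor
    · rintro ⟨h1, hc1, hc2, heq⟩
      obtain ⟨k, hk1, hk2, hl, hr⟩ := localize n hn he h1 heq
      have hkIcc : k ∈ Set.Icc 1 (n / 2 - 1) := ⟨hk1, hk2⟩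
      have hk2' : 2 * k + 1 < n := by omega
      exact ⟨k, hkIcc, huniq k hk2' (f k) ξ (hf1 k hkIcc) (hf2 k hkIcc)
        ((mem_interval_iff n k hn0 ξ).2 ⟨hl, hr⟩) heq⟩
    · rintro ⟨k, hkIcc, rfl⟩
      have hk1 : 1 ≤ k := hkIcc.1
      have hk2' : 2 * k + 1 < n := by have := hkIcc.2; omega
      have hmem := hf1 k hkIcc
      have heq := hf2 k hkIcc
      have hbd := (mem_interval_iff n k hn0 (f k)).1 hmem
      have h0b := bounds_mem n k hn0 hk2' (Set.Ioo_subset_Icc_self hmem)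
      have hk1' : (1 : ℝ) ≤ (k : ℝ) := by exact_mod_cast hk1
      have hpos : 0 < f k := lt_of_le_of_lt (by positivity : (0 : ℝ) ≤ (k : ℝ) * π / n) hmem.1
      exact ⟨⟨hpos, h0b.2⟩, cos_ne_zero_of_mem _ h0b.1 h0b.2, cos_n_ne n k hbd.1 hbd.2, heq⟩
  rw [hSeq]
  have hkey : ∀ k k', k ∈ Set.Icc 1 (n / 2 - 1) → k' ∈ Set.Icc 1 (n / 2 - 1) →
      k < k' → f k ≠ f k' := by
    intro k k' hk hk' hlt hfe
    have hmk := hf1 k hk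
    have hmk' := hf1 k' hk'
    rw [hfe] at hmk
    have h1 : (k' : ℝ) * π / n < (2 * (k : ℝ) + 1) * π / (2 * n) := lt_trans hmk'.1 hmk.2
    rw [div_lt_div_iff₀ (by positivity) (by positivity)] at h1
    have h2 : 2 * (k' : ℝ) < 2 * (k : ℝ) + 1 := by nlinarith [mul_pos hπ hn']
    have h3 : 2 * k' < 2 * k + 1 := by exact_mod_cast h2
    omega
  have hinj : Set.InjOn f (Set.Icc 1 (n / 2 - 1)) := by
    intro k hk k' hk' hfe
    rcases lt_trichotomy k k' with h | h | h
    · exact absurd hfe (hkey k k' hk hk' h)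
    · exact h
    · exact absurd hfe.symm (hkey k' k hk' hk h)
  rw [Set.ncard_image_of_injOn hinj, ← Finset.coe_Icc, Set.ncard_coe_finset, Nat.card_Icc]
  omega
end

section
/- Let n > 1 be odd. The equation tan(nx) = n·tan(x) has exactly (n-1)/2 - 1 solutions in (0, π/2), and each such solution ξ lies in an interval (2kπ/(2n), (2k+1)π/(2n)) for some k with 1 ≤ k ≤ (n-1)/2 - 1. -/
open Real Set

noncomputable def Gf (n : ℕ) (x : ℝ) : ℝ :=
  Real.sin (n * x) * Real.cos x - n * (Real.cos (n * x) * Real.sin x)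

lemma Gf_hasDerivAt (n : ℕ) (x : ℝ) :
    HasDerivAt (Gf n) (((n : ℝ) ^ 2 - 1) * (Real.sin (n * x) * Real.sin x)) x := by
  have hnx : HasDerivAt (fun y : ℝ => (n : ℝ) * y) (n : ℝ) x := by
    simpa using (hasDerivAt_id x).const_mul (n : ℝ)
  have hsin : HasDerivAt (fun y : ℝ => Real.sin ((n : ℝ) * y))
      (Real.cos ((n : ℝ) * x) * n) x := (Real.hasDerivAt_sin _).comp x hnx
  have hcos : HasDerivAt (fun y : ℝ => Real.cos ((n : ℝ) * y))
      (-Real.sin ((n : ℝ) * x) * n) x := (Real.hasDerivAt_cos _).comp x hnx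
  have h := (hsin.mul (Real.hasDerivAt_cos x)).sub
    ((hcos.mul (Real.hasDerivAt_sin x)).const_mul (n : ℝ))
  unfold Gf
  exact h.congr_deriv (by ring)

lemma Gf_mono (n k : ℕ) (hn : 1 < n) (a b : ℝ) (h0 : 0 ≤ a)
    (ha : (k : ℝ) * π / n ≤ a) (hb : b ≤ ((k : ℝ) + 1) * π / n) (hbp : b ≤ π / 2) :
    StrictMonoOn (fun x => (-1 : ℝ) ^ k * Gf n x) (Set.Icc a b) := by
  have hπ := Real.pi_pos
  have hn0 : (0 : ℝ) < n := by exact_mod_cast Nat.lt_of_lt_of_le Nat.zero_lt_one hn.le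
  apply strictMonoOn_of_deriv_pos (convex_Icc a b)
  · apply Continuous.continuousOn
    unfold Gf; fun_prop
  · intro x hx
    rw [interior_Icc] at hx
    have hd := ((Gf_hasDerivAt n x).const_mul ((-1 : ℝ) ^ k)).deriv
    rw [hd]
    have hx0 : 0 < x := lt_of_le_of_lt h0 hx.1
    have hxp : x < π := lt_of_lt_of_le hx.2 (by linarith)
    have hsx : 0 < Real.sin x := Real.sin_pos_of_pos_of_lt_pi hx0 hxp
    have h1 : (k : ℝ) * π < n * x := by
      have : (k : ℝ) * π / n < x := lt_of_le_of_lt ha hx.1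
      calc (k : ℝ) * π = n * ((k:ℝ) * π / n) := by field_simp
        _ < n * x := by exact mul_lt_mul_of_pos_left this hn0
    have h2 : (n : ℝ) * x < ((k : ℝ) + 1) * π := by
      have : x < ((k:ℝ)+1) * π / n := lt_of_lt_of_le hx.2 hb
      calc (n : ℝ) * x < n * (((k:ℝ)+1) * π / n) := mul_lt_mul_of_pos_left this hn0
        _ = ((k:ℝ)+1) * π := by field_simp
    have hs : 0 < (-1 : ℝ) ^ k * Real.sin (n * x) := by
      have e : Real.sin ((n * x - k * π) + k * π) = (-1 : ℝ) ^ k * Real.sin (n * x - k * π) :=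
        Real.sin_add_nat_mul_pi _ k
      have e2 : Real.sin ((n : ℝ) * x) = (-1 : ℝ) ^ k * Real.sin (n * x - k * π) := by
        rw [← e]; ring_nf
      have hp : 0 < Real.sin ((n : ℝ) * x - k * π) :=
        Real.sin_pos_of_pos_of_lt_pi (by linarith) (by linarith)
      rw [e2, ← mul_assoc, ← pow_add]
      have : (-1 : ℝ) ^ (k + k) = 1 := Even.neg_one_pow ⟨k, rfl⟩
      rw [this, one_mul]; exact hp
    have hn2 : (1 : ℝ) < (n : ℝ) := by exact_mod_cast hn
    have hnn : (0 : ℝ) < (n : ℝ) ^ 2 - 1 := by nlinarith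
    have key := mul_pos (mul_pos hnn hs) hsx
    nlinarith [key]

lemma Gf_left (n k : ℕ) (hn : 0 < n) :
    Gf n ((k : ℝ) * π / n) = -(n : ℝ) * ((-1) ^ k * Real.sin ((k : ℝ) * π / n)) := by
  have hn0 : (n : ℝ) ≠ 0 := by exact_mod_cast hn.ne'
  have e : (n : ℝ) * ((k : ℝ) * π / n) = (k : ℝ) * π := by field_simp
  have hck : Real.cos ((k : ℝ) * π) = (-1) ^ k := by
    simpa using Real.cos_add_nat_mul_pi 0 k
  unfold Gf
  rw [e, Real.sin_nat_mul_pi, hck]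
  ring

lemma Gf_mid (n k : ℕ) (hn : 0 < n) :
    Gf n ((2 * (k : ℝ) + 1) * π / (2 * n)) =
      (-1) ^ k * Real.cos ((2 * (k : ℝ) + 1) * π / (2 * n)) := by
  have hn0 : (n : ℝ) ≠ 0 := by exact_mod_cast hn.ne'
  have e : (n : ℝ) * ((2 * (k : ℝ) + 1) * π / (2 * n)) = π / 2 + k * π := by field_simp; ring
  have hs : Real.sin (π / 2 + (k : ℝ) * π) = (-1) ^ k := by
    rw [Real.sin_add_nat_mul_pi, Real.sin_pi_div_two, mul_one]
  have hc : Real.cos (π / 2 + (k : ℝ) * π) = 0 := by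
    rw [Real.cos_add_nat_mul_pi, Real.cos_pi_div_two, mul_zero]
  unfold Gf
  rw [e, hs, hc]
  ring

lemma Gf_half (n K : ℕ) (hK : n = 2 * K + 1) : Gf n (π / 2) = 0 := by
  have e : (n : ℝ) * (π / 2) = π / 2 + K * π := by
    rw [hK]; push_cast; ring
  have hc : Real.cos (π / 2 + (K : ℝ) * π) = 0 := by
    rw [Real.cos_add_nat_mul_pi, Real.cos_pi_div_two, mul_zero]
  unfold Gf
  rw [e, hc, Real.cos_pi_div_two]
  ring

lemma Gf_mem_iff (n : ℕ) (hn : 1 < n) (x : ℝ) (hx : x ∈ Set.Ioo 0 (π / 2)) :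
    (Real.cos x ≠ 0 ∧ Real.cos (n * x) ≠ 0 ∧ Real.tan (n * x) = n * Real.tan x) ↔
      Gf n x = 0 := by
  have hπ := Real.pi_pos
  have hcx : 0 < Real.cos x := Real.cos_pos_of_mem_Ioo ⟨by linarith [hx.1], hx.2⟩
  constructor
  · rintro ⟨hc, hcn, ht⟩
    rw [Real.tan_eq_sin_div_cos, Real.tan_eq_sin_div_cos] at ht
    field_simp at ht
    unfold Gf
    linarith [ht]
  · intro hG
    unfold Gf at hG
    have hcn : Real.cos ((n : ℝ) * x) ≠ 0 := by
      intro h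
      have hs2 : Real.sin ((n : ℝ) * x) ^ 2 = 1 := by
        have := Real.sin_sq_add_cos_sq ((n : ℝ) * x)
        rw [h] at this; nlinarith [this]
      have hsne : Real.sin ((n : ℝ) * x) ≠ 0 := by
        intro h2; rw [h2] at hs2; norm_num at hs2
      have : Real.sin ((n : ℝ) * x) * Real.cos x = 0 := by
        rw [h] at hG; linarith [hG]
      rcases mul_eq_zero.mp this with h3 | h3
      · exact hsne h3
      · linarith
    refine ⟨hcx.ne', hcn, ?_⟩
    rw [Real.tan_eq_sin_div_cos, Real.tan_eq_sin_div_cos]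
    field_simp
    linarith [hG]

lemma Gf_exu (n k K : ℕ) (hn : 1 < n) (hK : n = 2 * K + 1) (hk1 : 1 ≤ k) (hk2 : k ≤ K - 1) :
    ∃! x : ℝ, x ∈ Set.Ioo ((k : ℝ) * π / n) ((2 * (k : ℝ) + 1) * π / (2 * n)) ∧ Gf n x = 0 := by
  have hπ := Real.pi_pos
  have hn0 : (0 : ℝ) < n := by exact_mod_cast Nat.lt_of_lt_of_le Nat.zero_lt_one hn.le
  have hK1 : 1 ≤ K := by omega
  have hkK : (k : ℝ) ≤ (K : ℝ) - 1 := by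
    have : (k : ℝ) ≤ ((K - 1 : ℕ) : ℝ) := by exact_mod_cast hk2
    rw [Nat.cast_sub hK1] at this; simpa using this
  have hnr : (n : ℝ) = 2 * K + 1 := by rw [hK]; push_cast; ring
  set a := (k : ℝ) * π / n with hadef
  set c := (2 * (k : ℝ) + 1) * π / (2 * n) with hcdef
  have hk1' : (1 : ℝ) ≤ (k : ℝ) := by exact_mod_cast hk1
  have hac : a < c := by
    rw [hadef, hcdef, div_lt_div_iff₀ hn0 (by linarith)]
    nlinarith
  have ha0 : 0 < a := by positivity
  have hcb : c ≤ ((k : ℝ) + 1) * π / n := by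
    rw [hcdef, div_le_div_iff₀ (by linarith) hn0]
    nlinarith
  have hcp : c < π / 2 := by
    rw [hcdef, div_lt_div_iff₀ (by linarith) (by norm_num)]
    nlinarith
  have hmono := Gf_mono n k hn a c ha0.le le_rfl hcb hcp.le
  have hga : (-1 : ℝ) ^ k * Gf n a < 0 := by
    rw [hadef, Gf_left n k (by omega)]
    have hsa : 0 < Real.sin ((k : ℝ) * π / n) := by
      apply Real.sin_pos_of_pos_of_lt_pi
      · positivity
      · rw [div_lt_iff₀ hn0]; nlinarith
    have hsq : ((-1 : ℝ) ^ k) ^ 2 = 1 := by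
      rcases Nat.even_or_odd k with h | h
      · rw [h.neg_one_pow]; norm_num
      · rw [h.neg_one_pow]; norm_num
    have e : (-1:ℝ)^k * (-(n:ℝ) * ((-1)^k * Real.sin ((k : ℝ) * π / n))) =
        -((n:ℝ) * Real.sin ((k : ℝ) * π / n)) * ((-1:ℝ)^k)^2 := by ring
    rw [e, hsq, mul_one]
    nlinarith [mul_pos hn0 hsa]
  have hgc : 0 < (-1 : ℝ) ^ k * Gf n c := by
    rw [hcdef, Gf_mid n k (by omega)]
    have hcc : 0 < Real.cos ((2 * (k : ℝ) + 1) * π / (2 * n)) := by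
      apply Real.cos_pos_of_mem_Ioo
      constructor
      · have : (0:ℝ) < (2 * (k : ℝ) + 1) * π / (2 * n) := by positivity
        linarith
      · exact hcp
    have hsq : ((-1 : ℝ) ^ k) ^ 2 = 1 := by
      rcases Nat.even_or_odd k with h | h
      · rw [h.neg_one_pow]; norm_num
      · rw [h.neg_one_pow]; norm_num
    have e : (-1:ℝ)^k * ((-1:ℝ)^k * Real.cos ((2 * (k : ℝ) + 1) * π / (2 * n))) =
        Real.cos ((2 * (k : ℝ) + 1) * π / (2 * n)) * ((-1:ℝ)^k)^2 := by ring
    rw [e, hsq, mul_one]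
    exact hcc
  have hcont : ContinuousOn (fun x => (-1 : ℝ) ^ k * Gf n x) (Set.Icc a c) := by
    apply Continuous.continuousOn
    unfold Gf; fun_prop
  have hivt := intermediate_value_Ioo hac.le hcont
  have h0mem : (0 : ℝ) ∈ Set.Ioo ((-1 : ℝ) ^ k * Gf n a) ((-1 : ℝ) ^ k * Gf n c) := ⟨hga, hgc⟩
  obtain ⟨x, hxmem, hxval⟩ := hivt h0mem
  have hGx : Gf n x = 0 := by
    have hne : ((-1 : ℝ) ^ k) ≠ 0 := by
      rcases Nat.even_or_odd k with h | h
      · rw [h.neg_one_pow]; norm_num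
      · rw [h.neg_one_pow]; norm_num
    field_simp at hxval
    exact (mul_eq_zero.mp hxval).resolve_left hne
  refine ⟨x, ⟨hxmem, hGx⟩, ?_⟩
  rintro y ⟨hy, hGy⟩
  have h1 : ((-1 : ℝ) ^ k * Gf n y) = ((-1 : ℝ) ^ k * Gf n x) := by rw [hGy, hGx]
  exact hmono.injOn (Set.mem_Icc.mpr ⟨hy.1.le, hy.2.le⟩)
    (Set.mem_Icc.mpr ⟨hxmem.1.le, hxmem.2.le⟩) h1

lemma Gf_floor (n k : ℕ) (hn : 1 < n) (x : ℝ)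
    (hx : x ∈ Set.Ioo ((k : ℝ) * π / n) ((2 * (k : ℝ) + 1) * π / (2 * n))) :
    ⌊(n : ℝ) * x / π⌋₊ = k := by
  have hπ := Real.pi_pos
  have hn0 : (0 : ℝ) < n := by exact_mod_cast Nat.lt_of_lt_of_le Nat.zero_lt_one hn.le
  have hxl : (k : ℝ) * π < n * x := by
    have := hx.1
    rw [div_lt_iff₀ hn0] at this
    nlinarith
  have hxr : (n : ℝ) * x < ((k : ℝ) + 1) * π := by
    have := hx.2
    rw [lt_div_iff₀ (by linarith)] at this
    nlinarith
  have hx0 : 0 < x := lt_of_le_of_lt (by positivity) hx.1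
  rw [Nat.floor_eq_iff (by positivity)]
  constructor
  · rw [le_div_iff₀ hπ]; linarith
  · rw [div_lt_iff₀ hπ]; push_cast; linarith

set_option maxHeartbeats 1000000 in
lemma Gf_cover (n K : ℕ) (hn : 1 < n) (hK : n = 2 * K + 1) (ξ : ℝ)
    (hξ : ξ ∈ Set.Ioo 0 (π / 2)) (hG : Gf n ξ = 0) :
    ∃ k : ℕ, 1 ≤ k ∧ k ≤ K - 1 ∧
      ξ ∈ Set.Ioo ((k : ℝ) * π / n) ((2 * (k : ℝ) + 1) * π / (2 * n)) := by
  have hπ := Real.pi_pos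
  have hn0 : (0 : ℝ) < n := by exact_mod_cast Nat.lt_of_lt_of_le Nat.zero_lt_one hn.le
  have hnr : (n : ℝ) = 2 * K + 1 := by rw [hK]; push_cast; ring
  have hK1 : 1 ≤ K := by omega
  set j := ⌊(n : ℝ) * ξ / π⌋₊ with hjdef
  have hξ0 := hξ.1
  have hξ2 := hξ.2
  have hpos : 0 ≤ (n : ℝ) * ξ / π := by positivity
  have hfl : (j : ℝ) ≤ (n : ℝ) * ξ / π := Nat.floor_le hpos
  have hfl2 : (n : ℝ) * ξ / π < (j : ℝ) + 1 := Nat.lt_floor_add_one _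
  have hjl : (j : ℝ) * π ≤ (n : ℝ) * ξ := by
    rw [← le_div_iff₀ hπ]; exact hfl
  have hjr : (n : ℝ) * ξ < ((j : ℝ) + 1) * π := by
    rw [← div_lt_iff₀ hπ]; exact hfl2
  -- j ≤ K
  have hjK : j ≤ K := by
    by_contra h
    push_neg at h
    have : ((K : ℝ) + 1) * π ≤ (j : ℝ) * π := by
      have : (K : ℝ) + 1 ≤ (j : ℝ) := by exact_mod_cast h
      nlinarith
    nlinarith [hjl, hξ2, hnr]
  -- j ≠ 0
  have hj0 : j ≠ 0 := by
    intro h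
    have hξlt : ξ < π / n := by
      rw [lt_div_iff₀ hn0]
      have : (n : ℝ) * ξ < 1 * π := by rw [h] at hjr; push_cast at hjr; linarith
      linarith
    have hn2 : (2:ℝ) ≤ (n:ℝ) := by exact_mod_cast hn
    have hmono := Gf_mono n 0 hn 0 (π / n) le_rfl (by simp) (by norm_num)
      (by rw [div_le_div_iff₀ hn0 (by norm_num)]; nlinarith)
    have h00 : Gf n 0 = 0 := by unfold Gf; simp
    have := hmono (Set.mem_Icc.mpr ⟨le_rfl, by linarith⟩)
      (Set.mem_Icc.mpr ⟨hξ0.le, hξlt.le⟩) hξ0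
    simp only [pow_zero, one_mul, h00, hG] at this
    exact lt_irrefl 0 this
  -- j ≠ K
  have hjK' : j ≠ K := by
    intro h
    have hξge : (K : ℝ) * π / n ≤ ξ := by
      rw [div_le_iff₀ hn0]
      rw [h] at hjl; linarith [hjl]
    have hb2 : π / 2 ≤ ((K : ℝ) + 1) * π / n := by
      rw [div_le_div_iff₀ (by norm_num) hn0]; nlinarith [hnr]
    have hmono := Gf_mono n K hn ((K : ℝ) * π / n) (π / 2) (by positivity) le_rfl hb2 le_rfl
    have hhalf := Gf_half n K hK
    have := hmono (Set.mem_Icc.mpr ⟨hξge, hξ2.le⟩)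
      (Set.mem_Icc.mpr ⟨by nlinarith [hnr], le_rfl⟩) hξ2
    simp only [hG, hhalf, mul_zero] at this
    exact lt_irrefl 0 this
  have hj1 : 1 ≤ j := by omega
  have hjm : j ≤ K - 1 := by omega
  refine ⟨j, hj1, hjm, ?_, ?_⟩
  · -- ξ > j π / n
    rcases lt_or_eq_of_le (by rw [div_le_iff₀ hn0]; linarith : (j : ℝ) * π / n ≤ ξ) with h | h
    · exact h
    · exfalso
      have hGa := Gf_left n j (by omega)
      rw [← h] at hG
      have hsa : 0 < Real.sin ((j : ℝ) * π / n) := by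
        apply Real.sin_pos_of_pos_of_lt_pi
        · have : (0:ℝ) < (j:ℝ) := by exact_mod_cast hj1
          positivity
        · rw [div_lt_iff₀ hn0]
          have : (j : ℝ) ≤ K - 1 := by
            have : (j : ℝ) ≤ ((K - 1 : ℕ) : ℝ) := by exact_mod_cast hjm
            rwa [Nat.cast_sub hK1, Nat.cast_one] at this
          nlinarith [hnr]
      rw [hGa] at hG
      have hsq : ((-1 : ℝ) ^ j) ^ 2 = 1 := by
        rcases Nat.even_or_odd j with hpar | hpar
        · rw [hpar.neg_one_pow]; norm_num
        · rw [hpar.neg_one_pow]; norm_num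
      have hz : (-1:ℝ) ^ j * Real.sin ((j : ℝ) * π / n) = 0 := by
        rcases mul_eq_zero.mp hG with h2 | h2
        · exfalso; linarith
        · exact h2
      have he : Real.sin ((j : ℝ) * π / n) =
          (-1:ℝ) ^ j * ((-1:ℝ) ^ j * Real.sin ((j : ℝ) * π / n)) := by
        rw [← mul_assoc, ← sq, hsq, one_mul]
      rw [hz, mul_zero] at he
      linarith
  · -- ξ < (2j+1)π/(2n)
    by_contra h
    push_neg at h
    have hjm' : (j : ℝ) ≤ (K : ℝ) - 1 := by
      have : (j : ℝ) ≤ ((K - 1 : ℕ) : ℝ) := by exact_mod_cast hjm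
      rwa [Nat.cast_sub hK1, Nat.cast_one] at this
    have hb : ((j : ℝ) + 1) * π / n ≤ π / 2 := by
      rw [div_le_div_iff₀ hn0 (by norm_num)]
      have h1 : ((j : ℝ) + 1) * 2 ≤ (n : ℝ) := by rw [hnr]; linarith
      nlinarith [h1, hπ]
    have hmono := Gf_mono n j hn ((j : ℝ) * π / n) (((j : ℝ) + 1) * π / n)
      (by positivity) le_rfl le_rfl hb
    have hπn := mul_pos hπ hn0
    have hcm : (j : ℝ) * π / n ≤ (2 * (j : ℝ) + 1) * π / (2 * n) := by
      rw [div_le_div_iff₀ hn0 (by linarith)]; nlinarith [hπn]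
    have hcm2 : (2 * (j : ℝ) + 1) * π / (2 * n) ≤ ((j : ℝ) + 1) * π / n := by
      rw [div_le_div_iff₀ (by linarith) hn0]; nlinarith [hπn]
    have hξb : ξ ≤ ((j : ℝ) + 1) * π / n := by
      rw [le_div_iff₀ hn0]
      nlinarith [hjr]
    have hξa : (j : ℝ) * π / n ≤ ξ := by rw [div_le_iff₀ hn0]; linarith
    have hle := hmono.monotoneOn (Set.mem_Icc.mpr ⟨hcm, hcm2⟩)
      (Set.mem_Icc.mpr ⟨hξa, hξb⟩) h
    have hgc : 0 < (-1 : ℝ) ^ j * Gf n ((2 * (j : ℝ) + 1) * π / (2 * n)) := by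
      rw [Gf_mid n j (by omega)]
      have hcc : 0 < Real.cos ((2 * (j : ℝ) + 1) * π / (2 * n)) := by
        apply Real.cos_pos_of_mem_Ioo
        constructor
        · have : (0:ℝ) < (2 * (j : ℝ) + 1) * π / (2 * n) := by positivity
          linarith
        · rw [div_lt_div_iff₀ (by linarith) (by norm_num)]; nlinarith [hjm', hnr]
      have hsq : ((-1 : ℝ) ^ j) ^ 2 = 1 := by
        rcases Nat.even_or_odd j with hpar | hpar
        · rw [hpar.neg_one_pow]; norm_num
        · rw [hpar.neg_one_pow]; norm_num
      nlinarith [hsq, hcc]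
    simp only [hG, mul_zero] at hle
    linarith

theorem stmt_4 (n : ℕ) (hn : 1 < n) (ho : Odd n) :
    Set.ncard {x : ℝ | x ∈ Set.Ioo 0 (π / 2) ∧ Real.cos x ≠ 0 ∧ Real.cos (n * x) ≠ 0 ∧
        Real.tan (n * x) = n * Real.tan x} = (n - 1) / 2 - 1 ∧
    ∀ ξ : ℝ, ξ ∈ Set.Ioo 0 (π / 2) → Real.cos ξ ≠ 0 → Real.cos (n * ξ) ≠ 0 →
      Real.tan (n * ξ) = n * Real.tan ξ →
      ∃ k : ℕ, 1 ≤ k ∧ k ≤ (n - 1) / 2 - 1 ∧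
        ξ ∈ Set.Ioo ((2 * k * π) / (2 * n)) (((2 * k + 1) * π) / (2 * n)) := by
  obtain ⟨K, hK⟩ := ho
  have hK' : n = 2 * K + 1 := by omega
  have hπ := Real.pi_pos
  have hn0 : (0 : ℝ) < n := by exact_mod_cast Nat.lt_of_lt_of_le Nat.zero_lt_one hn.le
  have hK1 : 1 ≤ K := by omega
  have hm : (n - 1) / 2 - 1 = K - 1 := by omega
  have hSeq : {x : ℝ | x ∈ Set.Ioo 0 (π / 2) ∧ Real.cos x ≠ 0 ∧ Real.cos (n * x) ≠ 0 ∧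
        Real.tan (n * x) = n * Real.tan x} =
      {x : ℝ | x ∈ Set.Ioo 0 (π / 2) ∧ Gf n x = 0} := by
    ext x
    simp only [Set.mem_setOf_eq]
    constructor
    · rintro ⟨hx, h1, h2, h3⟩
      exact ⟨hx, (Gf_mem_iff n hn x hx).1 ⟨h1, h2, h3⟩⟩
    · rintro ⟨hx, h⟩
      obtain ⟨h1, h2, h3⟩ := (Gf_mem_iff n hn x hx).2 h
      exact ⟨hx, h1, h2, h3⟩
  have hchalf : ∀ k : ℕ, k ≤ K - 1 → (2 * (k : ℝ) + 1) * π / (2 * n) ≤ π / 2 := by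
    intro k hk
    have hkr : (k : ℝ) ≤ (K : ℝ) - 1 := by
      have : (k : ℝ) ≤ ((K - 1 : ℕ) : ℝ) := by exact_mod_cast hk
      rwa [Nat.cast_sub hK1, Nat.cast_one] at this
    have hnr : (n : ℝ) = 2 * K + 1 := by rw [hK']; push_cast; ring
    rw [div_le_div_iff₀ (by linarith) (by norm_num)]
    nlinarith [hπ]
  constructor
  · rw [hSeq, hm]
    have hbij : Set.BijOn (fun x : ℝ => ⌊(n : ℝ) * x / π⌋₊)
        {x : ℝ | x ∈ Set.Ioo 0 (π / 2) ∧ Gf n x = 0} (Set.Icc 1 (K - 1)) := by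
      refine ⟨?_, ?_, ?_⟩
      · intro x hx
        obtain ⟨k, hk1, hk2, hmem⟩ := Gf_cover n K hn hK' x hx.1 hx.2
        have he := Gf_floor n k hn x hmem
        simp only [he]
        exact Set.mem_Icc.mpr ⟨hk1, hk2⟩
      · intro x hx y hy hxy
        obtain ⟨k, hk1, hk2, hmem⟩ := Gf_cover n K hn hK' x hx.1 hx.2
        obtain ⟨l, hl1, hl2, hmem'⟩ := Gf_cover n K hn hK' y hy.1 hy.2
        have e1 := Gf_floor n k hn x hmem
        have e2 := Gf_floor n l hn y hmem'
        have hxy' : ⌊(n : ℝ) * x / π⌋₊ = ⌊(n : ℝ) * y / π⌋₊ := hxy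
        have hkl : k = l := by rw [← e1, ← e2, hxy']
        subst hkl
        exact (Gf_exu n k K hn hK' hk1 hk2).unique ⟨hmem, hx.2⟩ ⟨hmem', hy.2⟩
      · intro k hk
        rw [Set.mem_Icc] at hk
        obtain ⟨x, ⟨hmem, hGx⟩, -⟩ := Gf_exu n k K hn hK' hk.1 hk.2
        refine ⟨x, ⟨⟨?_, ?_⟩, hGx⟩, Gf_floor n k hn x hmem⟩
        · have hk1r : (1 : ℝ) ≤ (k : ℝ) := by exact_mod_cast hk.1
          have : (0 : ℝ) < (k : ℝ) * π / n := by positivity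
          linarith [hmem.1]
        · have := hchalf k hk.2
          linarith [hmem.2]
    have him := hbij.image_eq
    have hinj := Set.ncard_image_of_injOn hbij.injOn
    rw [him] at hinj
    rw [← hinj, ← Finset.coe_Icc, Set.ncard_coe_finset, Nat.card_Icc]
    omega
  · intro ξ hξ hc hcn ht
    have hGξ : Gf n ξ = 0 := (Gf_mem_iff n hn ξ hξ).1 ⟨hc, hcn, ht⟩
    obtain ⟨k, hk1, hk2, hmem⟩ := Gf_cover n K hn hK' ξ hξ hGξ
    refine ⟨k, hk1, by omega, ?_, ?_⟩
    · have e : (2 * (k : ℝ) * π) / (2 * (n : ℝ)) = (k : ℝ) * π / n := by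
        rw [mul_assoc]
        exact mul_div_mul_left _ _ two_ne_zero
      calc (2 * (k : ℝ) * π) / (2 * (n : ℝ)) = (k : ℝ) * π / n := e
        _ < ξ := hmem.1
    · exact hmem.2
end

section
/- With P_n, Q_n defined by the recurrence P₁(z) = z, Q₁(z) = 1, P_{n+1}(z) = P_n(z) + z·Q_n(z), Q_{n+1}(z) = Q_n(z) - z·P_n(z) (viewed as polynomials over ℂ), for every n ≥ 1 one has -2·P_n(z) = i^{n+1}(z - i)^n + (-i)^{n+1}(z + i)^n and 2·Q_n(z) = i^n(z - i)^n + (-i)^n(z + i)^n. -/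
open Polynomial Complex

theorem stmt_8 (P Q : ℕ → Polynomial ℂ)
    (hP1 : P 1 = X) (hQ1 : Q 1 = 1)
    (hP : ∀ n ≥ 1, P (n + 1) = P n + X * Q n)
    (hQ : ∀ n ≥ 1, Q (n + 1) = Q n - X * P n) :
    ∀ n ≥ 1, ∀ z : ℂ,
      -2 * (P n).eval z = Complex.I ^ (n + 1) * (z - Complex.I) ^ n
          + (-Complex.I) ^ (n + 1) * (z + Complex.I) ^ n ∧
      2 * (Q n).eval z = Complex.I ^ n * (z - Complex.I) ^ n
          + (-Complex.I) ^ n * (z + Complex.I) ^ n := by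
  have hI : Complex.I ^ 2 = -1 := Complex.I_sq
  intro n hn
  induction n, hn using Nat.le_induction with
  | base =>
    intro z
    simp only [hP1, hQ1, eval_X, eval_one, pow_one]
    constructor
    · linear_combination (-(2*z)) * hI
    · linear_combination 2 * hI
  | succ n hn ih =>
    intro z
    obtain ⟨ih1, ih2⟩ := ih z
    rw [hP n hn, hQ n hn]
    simp only [eval_add, eval_sub, eval_mul, eval_X]
    constructor
    · linear_combination ih1 - z * ih2
        - (Complex.I ^ n * (z - Complex.I) ^ (n + 1)
          + (-Complex.I) ^ n * (z + Complex.I) ^ (n + 1)) * hI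
    · linear_combination ih2 + z * ih1
        + (Complex.I ^ n * (z - Complex.I) ^ n
          + (-Complex.I) ^ n * (z + Complex.I) ^ n) * hI
end

section
/- For n > 1 and R_n(z) = -(1/2)·i^n·[(n z + i)(z - i)^n + (-1)^n (n z - i)(z + i)^n], the root z = 0 of R_n has multiplicity exactly three, i.e., z³ divides R_n(z) but z⁴ does not. -/
set_option maxRecDepth 8000
open Polynomial Complex

noncomputable def Rpoly (n : ℕ) : Polynomial ℂ :=
  Polynomial.C (-(1 / 2) * Complex.I ^ n) *
    ((Polynomial.C (n : ℂ) * Polynomial.X + Polynomial.C Complex.I) *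
        (Polynomial.X - Polynomial.C Complex.I) ^ n +
      Polynomial.C ((-1 : ℂ) ^ n) *
        ((Polynomial.C (n : ℂ) * Polynomial.X - Polynomial.C Complex.I) *
          (Polynomial.X + Polynomial.C Complex.I) ^ n))

lemma auxS (a b : ℂ) (q : ℂ[X]) (k : ℕ) :
    ((C a * X + C b) * q).coeff (k+1) = a * q.coeff k + b * q.coeff (k+1) := by
  rw [add_mul, mul_assoc]
  simp [coeff_X_mul]

lemma aux0 (a b : ℂ) (q : ℂ[X]) :
    ((C a * X + C b) * q).coeff 0 = b * q.coeff 0 := by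
  simp [mul_coeff_zero]

lemma aux1 (a b : ℂ) (q : ℂ[X]) :
    ((C a * X + C b) * q).coeff 1 = a * q.coeff 0 + b * q.coeff 1 := auxS a b q 0
lemma aux2 (a b : ℂ) (q : ℂ[X]) :
    ((C a * X + C b) * q).coeff 2 = a * q.coeff 1 + b * q.coeff 2 := auxS a b q 1
lemma aux3 (a b : ℂ) (q : ℂ[X]) :
    ((C a * X + C b) * q).coeff 3 = a * q.coeff 2 + b * q.coeff 3 := auxS a b q 2

lemma R_eq (n : ℕ) : Rpoly n =
    Polynomial.C (-(1 / 2) * Complex.I ^ n) *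
    ((Polynomial.C (n : ℂ) * Polynomial.X + Polynomial.C Complex.I) *
        (Polynomial.X + Polynomial.C (-Complex.I)) ^ n +
      Polynomial.C ((-1 : ℂ) ^ n) *
        ((Polynomial.C (n : ℂ) * Polynomial.X + Polynomial.C (-Complex.I)) *
          (Polynomial.X + Polynomial.C Complex.I) ^ n)) := by
  have h1 : (X - C Complex.I : ℂ[X]) = X + C (-Complex.I) := by
    rw [C_neg, sub_eq_add_neg]
  have h2 : (C (n : ℂ) * X - C Complex.I : ℂ[X]) = C (n:ℂ) * X + C (-Complex.I) := by
    rw [C_neg, sub_eq_add_neg]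
  rw [Rpoly, h1, h2]

lemma Rc0 (m : ℕ) : (Rpoly (m+2)).coeff 0 = 0 := by
  rw [R_eq]
  simp only [coeff_C_mul, coeff_add, aux0]
  rw [coeff_X_add_C_pow, coeff_X_add_C_pow, neg_pow]
  push_cast
  ring

lemma Rc1 (m : ℕ) : (Rpoly (m+2)).coeff 1 = 0 := by
  rw [R_eq]
  simp only [coeff_C_mul, coeff_add, aux1]
  rw [coeff_X_add_C_pow, coeff_X_add_C_pow, coeff_X_add_C_pow, coeff_X_add_C_pow]
  have e1 : m+2-1 = m+1 := rfl
  rw [e1, Nat.sub_zero, Nat.choose_zero_right, Nat.choose_one_right, neg_pow, neg_pow]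
  push_cast
  ring

lemma Rc2 (m : ℕ) : (Rpoly (m+2)).coeff 2 = 0 := by
  rw [R_eq]
  simp only [coeff_C_mul, coeff_add, aux2]
  rw [coeff_X_add_C_pow, coeff_X_add_C_pow, coeff_X_add_C_pow, coeff_X_add_C_pow]
  have e1 : m+2-1 = m+1 := rfl
  have e2 : m+2-2 = m := rfl
  rw [e1, e2, Nat.choose_one_right, neg_pow, neg_pow]
  push_cast
  ring

lemma Rc3 (l : ℕ) : (Rpoly (l+3)).coeff 3 =
    -(1 / 2) * Complex.I ^ (l+3) * Complex.I ^ (l+1) * 2 * (-1:ℂ)^l *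
      (((l+3).choose 3 : ℂ) - (l+3) * ((l+3).choose 2 : ℂ)) := by
  rw [R_eq]
  simp only [coeff_C_mul, coeff_add, aux3]
  rw [coeff_X_add_C_pow, coeff_X_add_C_pow, coeff_X_add_C_pow, coeff_X_add_C_pow]
  have e1 : l+3-2 = l+1 := rfl
  have e2 : l+3-3 = l := rfl
  rw [e1, e2, neg_pow, neg_pow]
  push_cast
  ring

lemma choose_lt (n : ℕ) (hn : 2 ≤ n) : n.choose 3 < n * n.choose 2 := by
  obtain ⟨d, rfl⟩ : ∃ d, n = d + 2 := ⟨n - 2, by omega⟩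
  have h := Nat.choose_succ_right_eq (d+2) 2
  have hp : 0 < (d+2).choose 2 := Nat.choose_pos hn
  have hd : d + 2 - 2 = d := by omega
  rw [hd] at h
  nlinarith [h, hp]

theorem stmt_11 (n : ℕ) (hn : 1 < n) :
    (Polynomial.X ^ 3 ∣ Rpoly n) ∧ ¬ (Polynomial.X ^ 4 ∣ Rpoly n) := by
  obtain ⟨m, rfl⟩ : ∃ m, n = m + 2 := ⟨n - 2, by omega⟩
  constructor
  · rw [Polynomial.X_pow_dvd_iff]
    intro d hd
    interval_cases d
    · exact Rc0 m
    · exact Rc1 m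
    · exact Rc2 m
  · rw [Polynomial.X_pow_dvd_iff]
    push_neg
    refine ⟨3, by norm_num, ?_⟩
    rcases m with _ | l
    · -- n = 2
      rw [R_eq]
      simp only [coeff_C_mul, coeff_add, aux3]
      rw [coeff_X_add_C_pow, coeff_X_add_C_pow, coeff_X_add_C_pow, coeff_X_add_C_pow]
      norm_num [Complex.I_sq]
    · rw [show l + 1 + 2 = l + 3 from rfl, Rc3 l]
      have hne : (((l+3).choose 3 : ℂ)) ≠ ((l+3) : ℂ) * ((l+3).choose 2 : ℂ) := by
        have hlt := choose_lt (l+3) (by omega)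
        intro h
        have hc : (((l+3).choose 3 : ℕ) : ℂ) = (((l+3) * (l+3).choose 2 : ℕ) : ℂ) := by
          push_cast
          linear_combination h
        exact hlt.ne (Nat.cast_injective hc)
      have hsub : (((l+3).choose 3 : ℂ)) - ((l+3) : ℂ) * ((l+3).choose 2 : ℂ) ≠ 0 :=
        sub_ne_zero.mpr hne
      simp [Complex.I_ne_zero, hsub, pow_ne_zero]
end

section
/- Let n > 1 and x ∈ (0, π/2) with cos(nx) ≠ 0. Set z = tan(x). Then tan(nx) = n·tan(x) holds if and only if R_n(z) = 0, where R_n(z) = -(1/2)·i^n·[(n z + i)(z - i)^n + (-1)^n (n z - i)(z + i)^n]. -/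
open Polynomial Complex Real

theorem stmt_12 (n : ℕ) (hn : 1 < n) (x : ℝ) (hx : x ∈ Set.Ioo 0 (Real.pi / 2))
    (hc : Real.cos (n * x) ≠ 0) :
    Real.tan (n * x) = n * Real.tan x ↔ (Rpoly n).eval ((Real.tan x : ℝ) : ℂ) = 0 := by
  obtain ⟨hx0, hx1⟩ := hx
  have hcx : Real.cos x ≠ 0 := by
    have := Real.cos_pos_of_mem_Ioo (show x ∈ Set.Ioo (-(Real.pi/2)) (Real.pi/2) from
      ⟨by linarith [Real.pi_pos], hx1⟩)
    linarith
  have hcC : (Real.cos x : ℂ) ≠ 0 := by exact_mod_cast hcx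
  have hcC' : Complex.cos (x : ℂ) ≠ 0 := by rw [← Complex.ofReal_cos]; exact hcC
  set v : ℂ := ((Real.tan x : ℝ) : ℂ) with hv
  have hvm : v - Complex.I = (-Complex.I) * Complex.exp (x * Complex.I) / (Real.cos x : ℂ) := by
    rw [Complex.exp_mul_I, hv, Real.tan_eq_sin_div_cos]
    push_cast
    field_simp [hcC']
    linear_combination Complex.sin (x:ℂ) * Complex.I_sq
  have hvp : v + Complex.I = Complex.I * Complex.exp (-(x * Complex.I)) / (Real.cos x : ℂ) := by
    have h : -((x:ℂ) * Complex.I) = ((-x : ℝ) : ℂ) * Complex.I := by push_cast; ring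
    rw [h, Complex.exp_mul_I, hv, Real.tan_eq_sin_div_cos]
    push_cast
    rw [Complex.cos_neg, Complex.sin_neg]
    field_simp [hcC']
    linear_combination Complex.sin (x:ℂ) * Complex.I_sq
  have hE1 : Complex.exp (((n*x : ℝ):ℂ) * Complex.I)
      = (Real.cos (n*x) : ℂ) + (Real.sin (n*x) : ℂ) * Complex.I := by
    rw [Complex.exp_mul_I, ← Complex.ofReal_sin, ← Complex.ofReal_cos]
  have hE2 : Complex.exp (-(((n*x : ℝ):ℂ) * Complex.I))
      = (Real.cos (n*x) : ℂ) - (Real.sin (n*x) : ℂ) * Complex.I := by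
    have h : -(((n*x:ℝ):ℂ) * Complex.I) = ((-(n*x) : ℝ) : ℂ) * Complex.I := by push_cast; ring
    rw [h, Complex.exp_mul_I]
    push_cast
    rw [Complex.cos_neg, Complex.sin_neg]
    ring
  have hn0 : ((Real.cos x : ℂ))^n ≠ 0 := pow_ne_zero _ hcC
  have key : (Rpoly n).eval v =
      ((Real.sin (n*x) : ℂ) - n * v * (Real.cos (n*x) : ℂ)) / ((Real.cos x : ℂ))^n := by
    set c : ℂ := ((Real.cos x : ℝ) : ℂ) with hcdef
    set C : ℂ := ((Real.cos (n*x) : ℝ) : ℂ) with hCdef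
    set S : ℂ := ((Real.sin (n*x) : ℝ) : ℂ) with hSdef
    simp only [Rpoly, eval_mul, eval_add, eval_sub, eval_pow, eval_C, eval_X, eval_natCast]
    rw [hvm, hvp, div_pow, div_pow, mul_pow, mul_pow,
      ← Complex.exp_nat_mul, ← Complex.exp_nat_mul]
    have h1 : (n:ℂ) * ((x:ℂ) * Complex.I) = ((n*x:ℝ):ℂ) * Complex.I := by push_cast; ring
    have h2 : (n:ℂ) * (-((x:ℂ) * Complex.I)) = -(((n*x:ℝ):ℂ) * Complex.I) := by
      push_cast; ring
    rw [h1, h2, hE1, hE2]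
    have e1 : Complex.I ^ n * (-Complex.I)^n = 1 := by rw [← mul_pow]; simp
    have e2 : Complex.I ^ n * ((-1:ℂ)^n * Complex.I ^ n) = 1 := by
      rw [← mul_pow, ← mul_pow]; norm_num [Complex.I_mul_I]
    linear_combination (-(1/2)*((n:ℂ)*v+Complex.I)*(C+S*Complex.I)/c^n) * e1 +
      (-(1/2)*((n:ℂ)*v-Complex.I)*(C-S*Complex.I)/c^n) * e2 +
      (-S/c^n) * Complex.I_sq
  rw [key, _root_.div_eq_zero_iff]
  constructor
  · intro h
    left
    rw [Real.tan_eq_sin_div_cos, div_eq_iff hc] at h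
    have h' : Real.sin (n*x) - n * Real.tan x * Real.cos (n*x) = 0 := by rw [h]; ring
    rw [hv]
    exact_mod_cast h'
  · rintro (h | h)
    · rw [hv] at h
      have h' : Real.sin (n*x) - n * Real.tan x * Real.cos (n*x) = 0 := by
        exact_mod_cast h
      rw [Real.tan_eq_sin_div_cos, div_eq_iff hc]
      linarith
    · exact absurd h hn0
end

section
/- For n > 1, define S_n(x) = (n-1)·(x^{n+1} - 1) - (n+1)·(x^n - x). Then every complex root of S_n has absolute value 1. -/
open Polynomial Complex

lemma deriv_prod_XsubC (s : Finset ℂ) :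
    derivative (∏ ω ∈ s, (X - C ω)) = ∑ ω ∈ s, ∏ a ∈ s.erase ω, (X - C a) := by
  classical
  induction s using Finset.induction with
  | empty => simp
  | @insert i s hi ih =>
    rw [Finset.prod_insert hi, derivative_mul, derivative_X_sub_C, ih,
      Finset.sum_insert hi, Finset.erase_insert hi, one_mul, Finset.mul_sum]
    congr 1
    refine Finset.sum_congr rfl fun ω hω => ?_
    rw [Finset.erase_insert_of_ne (by rintro rfl; exact hi hω),
      Finset.prod_insert (fun h => hi (Finset.mem_of_mem_erase h))]

lemma re_half (w ω : ℂ) (hω : Complex.normSq ω = 1) (hne : w - ω ≠ 0) :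
    (w / (w - ω)).re = 1/2 + (Complex.normSq w - 1) / (2 * Complex.normSq (w - ω)) := by
  have hpos : 0 < Complex.normSq (w - ω) := Complex.normSq_pos.mpr hne
  have h : w / (w - ω) = 1/2 + (w + ω) / (2*(w - ω)) := by
    field_simp
    ring
  rw [h]
  have h4 : Complex.normSq (2*(w-ω)) = 4 * Complex.normSq (w-ω) := by
    rw [map_mul]
    norm_num [Complex.normSq_apply]
  have : ((w + ω) / (2*(w - ω))).re = (Complex.normSq w - 1) / (2 * Complex.normSq (w - ω)) := by
    rw [Complex.div_re, h4, ← add_div, div_eq_div_iff (by positivity) (by positivity)]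
    simp only [Complex.add_re, Complex.add_im, Complex.mul_re, Complex.mul_im,
      Complex.sub_re, Complex.sub_im, Complex.normSq_apply, Complex.re_ofNat, Complex.im_ofNat]
    rw [Complex.normSq_apply] at hω
    linear_combination (8*w.re*ω.re - 4*w.re^2 + 8*w.im*ω.im - 4*w.im^2 - 4*ω.re^2 - 4*ω.im^2) * hω
  rw [Complex.add_re, this]
  norm_num

lemma normSq_one_of_pow {ω : ℂ} {k : ℕ} (hk : k ≠ 0) (h : ω ^ k = 1) :
    Complex.normSq ω = 1 := by
  have h2 : Complex.normSq ω ^ k = 1 := by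
    rw [← map_pow, h, map_one]
  have h0 : 0 ≤ Complex.normSq ω := Complex.normSq_nonneg ω
  rcases lt_trichotomy (Complex.normSq ω) 1 with h1 | h1 | h1
  · have := pow_lt_one₀ h0 h1 hk
    simp [h2] at this
  · exact h1
  · have := one_lt_pow₀ h1 hk
    simp [h2] at this

noncomputable def Spoly (n : ℕ) : Polynomial ℂ :=
  Polynomial.C ((n : ℂ) - 1) * (Polynomial.X ^ (n + 1) - 1) -
    Polynomial.C ((n : ℂ) + 1) * (Polynomial.X ^ n - Polynomial.X)

theorem stmt_13 (n : ℕ) (hn : 1 < n) (z : ℂ) (hz : (Spoly n).eval z = 0) :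
    ‖z‖ = 1 := by
  classical
  have e : ((n:ℂ) - 1) * (z^(n+1) - 1) - ((n:ℂ)+1) * (z^n - z) = 0 := by
    simpa [Spoly] using hz
  have hnC : (2*(n:ℂ)) ≠ 0 := by
    simp only [mul_ne_zero_iff]
    exact ⟨two_ne_zero, Nat.cast_ne_zero.mpr (by omega)⟩
  by_cases h1 : z^n = 1
  · have hz1 : z = 1 := by
      rw [pow_succ, h1, one_mul] at e
      have h2 : (2*(n:ℂ)) * (z - 1) = 0 := by linear_combination e
      rcases mul_eq_zero.mp h2 with h | h
      · exact absurd h hnC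
      · exact sub_eq_zero.mp h
    simp [hz1]
  by_cases h2 : z^n = -1
  · have hz1 : z = -1 := by
      rw [pow_succ, h2] at e
      have h3 : (2:ℂ) * (z + 1) = 0 := by linear_combination e
      rcases mul_eq_zero.mp h3 with h | h
      · norm_num at h
      · linear_combination h
    simp [hz1]
  obtain ⟨w, hw⟩ := IsAlgClosed.exists_pow_nat_eq z (n := 2) (by norm_num)
  set N := 2*n with hN
  have hNpos : 0 < N := by omega
  have hzw : z^n = w^N := by rw [← hw, hN, pow_mul]
  have hu1 : w^N ≠ 1 := by rw [← hzw]; exact h1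
  have hu1' : w^N - 1 ≠ 0 := sub_ne_zero.mpr hu1
  set T := nthRootsFinset N (1:ℂ) with hT
  have hprim := Complex.isPrimitiveRoot_exp N (by omega)
  have hP := X_pow_sub_one_eq_prod hNpos hprim
  have hwT : w ∉ T := fun h => hu1 ((mem_nthRootsFinset hNpos (1:ℂ)).mp h)
  have hwne : ∀ ω ∈ T, w - ω ≠ 0 := fun ω hω => sub_ne_zero.mpr (fun h => hwT (h ▸ hω))
  have hProdEval : w^N - 1 = ∏ ω ∈ T, (w - ω) := by
    have := congrArg (eval w) hP
    simpa [eval_prod] using this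
  have hSum : (N:ℂ) * w^(N-1) = ∑ ω ∈ T, ∏ a ∈ T.erase ω, (w - a) := by
    have := congrArg (fun p => eval w (derivative p)) hP
    simp only [derivative_sub, derivative_one, derivative_X_pow, sub_zero,
      deriv_prod_XsubC] at this
    simpa [eval_finset_sum, eval_prod] using this
  have hterm : ∀ ω ∈ T, w / (w - ω) = w * (∏ a ∈ T.erase ω, (w - a)) / (w^N - 1) := by
    intro ω hω
    rw [div_eq_div_iff (hwne ω hω) hu1', hProdEval, ← Finset.mul_prod_erase T _ hω]
    ring
  have hSum2 : ∑ ω ∈ T, w / (w - ω) = (N:ℂ) * w^N / (w^N - 1) := by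
    rw [Finset.sum_congr rfl hterm, ← Finset.sum_div, ← Finset.mul_sum, ← hSum]
    have hww : w * ((N:ℂ) * w^(N-1)) = (N:ℂ) * w^N := by
      rw [mul_comm w, mul_assoc, ← pow_succ]
      congr 2
      omega
    rw [hww]
  have h1T : (1:ℂ) ∈ T := (mem_nthRootsFinset hNpos (1:ℂ)).mpr (one_pow N)
  have hm1T : (-1:ℂ) ∈ T := by
    refine (mem_nthRootsFinset hNpos (1:ℂ)).mpr ?_
    rw [hN, pow_mul]
    norm_num
  set T' := (T.erase 1).erase (-1) with hT'
  have hm1T1 : (-1:ℂ) ∈ T.erase 1 := Finset.mem_erase.mpr ⟨by norm_num, hm1T⟩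
  have hsplit : w/(w-1) + (w/(w-(-1)) + ∑ ω ∈ T', w/(w-ω)) = ∑ ω ∈ T, w/(w-ω) := by
    have A := Finset.add_sum_erase (ι := ℂ) (T.erase 1) (fun ω => w/(w-ω)) hm1T1
    have B := Finset.add_sum_erase (ι := ℂ) T (fun ω => w/(w-ω)) h1T
    rw [hT']
    rw [A, B]
  have e' : ((n:ℂ) - 1) * (w^N * w^2 - 1) - ((n:ℂ)+1) * (w^N - w^2) = 0 := by
    have p2 : z^(n+1) = w^N * w^2 := by rw [pow_succ, hzw, hw]
    rw [p2, hzw, ← hw] at e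
    exact e
  have hd1 : w - 1 ≠ 0 := hwne 1 h1T
  have hdm1 : w - (-1) ≠ 0 := hwne (-1) hm1T
  have hw1 : w + 1 ≠ 0 := by
    intro h; apply hdm1; linear_combination h
  have key : ∑ ω ∈ T', w/(w-ω) = (n:ℂ) - 1 := by
    have hstep : ∑ ω ∈ T', w/(w-ω) = (N:ℂ)*w^N/(w^N-1) - w/(w-1) - w/(w+1) := by
      rw [← hSum2, ← hsplit]; ring
    rw [hstep]
    have hNC : ((N:ℕ):ℂ) = 2*(n:ℂ) := by rw [hN]; push_cast; ring
    rw [hNC]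
    field_simp [hd1, hw1, hu1']
    linear_combination e'
  have hre : ∑ ω ∈ T', (w/(w-ω)).re = (n:ℝ) - 1 := by
    have := congrArg Complex.re key
    simpa [Complex.re_sum] using this
  have hcard : T'.card = N - 1 - 1 := by
    rw [hT', Finset.card_erase_of_mem hm1T1, Finset.card_erase_of_mem h1T,
      hprim.card_nthRootsFinset]
  have hcardR : ((T'.card : ℝ)) = 2*(n:ℝ) - 2 := by
    have h2 : T'.card = 2*(n-1) := by omega
    rw [h2]
    push_cast [Nat.cast_sub hn.le]
    ring
  have hne' : T'.Nonempty := Finset.card_pos.mp (by omega)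
  have hmem : ∀ ω ∈ T', Complex.normSq ω = 1 ∧ w - ω ≠ 0 := by
    intro ω hω
    have hωT : ω ∈ T := Finset.mem_of_mem_erase (Finset.mem_of_mem_erase hω)
    exact ⟨normSq_one_of_pow (by omega) ((mem_nthRootsFinset hNpos (1:ℂ)).mp hωT), hwne ω hωT⟩
  have habs : Complex.normSq w = 1 := by
    rcases lt_trichotomy (Complex.normSq w) 1 with hlt | heq | hgt
    · exfalso
      have hlt2 : ∑ ω ∈ T', (w/(w-ω)).re < ∑ ω ∈ T', (1/2 : ℝ) := by
        refine Finset.sum_lt_sum_of_nonempty hne' fun ω hω => ?_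
        obtain ⟨hω1, hω2⟩ := hmem ω hω
        rw [re_half w ω hω1 hω2]
        have hneg : (Complex.normSq w - 1) / (2 * Complex.normSq (w - ω)) < 0 :=
          div_neg_of_neg_of_pos (by linarith)
            (by have := Complex.normSq_pos.mpr hω2; linarith)
        linarith
      rw [hre, Finset.sum_const, nsmul_eq_mul, hcardR] at hlt2
      linarith
    · exact heq
    · exfalso
      have hlt2 : ∑ ω ∈ T', (1/2 : ℝ) < ∑ ω ∈ T', (w/(w-ω)).re := by
        refine Finset.sum_lt_sum_of_nonempty hne' fun ω hω => ?_
        obtain ⟨hω1, hω2⟩ := hmem ω hω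
        rw [re_half w ω hω1 hω2]
        have hpos : 0 < (Complex.normSq w - 1) / (2 * Complex.normSq (w - ω)) :=
          div_pos (by linarith) (by have := Complex.normSq_pos.mpr hω2; linarith)
        linarith
      rw [hre, Finset.sum_const, nsmul_eq_mul, hcardR] at hlt2
      linarith
  have habsw : ‖w‖ = 1 := by
    have hs := Complex.sq_norm w
    rw [habs] at hs
    have h4 : (‖w‖ - 1) * (‖w‖ + 1) = 0 := by linear_combination hs
    rcases mul_eq_zero.mp h4 with h | h
    · linarith [sub_eq_zero.mp h]
    · have := norm_nonneg w
      linarith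
  rw [← hw, norm_pow, habsw, one_pow]
end

section
/- Let n > 1 be an integer and let x be a nontrivial real solution (tan x ≠ 0, with all relevant tangents defined) of the system tan(nx) = n·tan(x) and tan((n+1)x) = (n+1)·tan(x). Then no such x exists; that is, the system tan(nx) = n·tan(x), tan((n+1)x) = (n+1)·tan(x) has no solution x with tan(x) ≠ 0. -/
open Real

theorem stmt_16 (n : ℕ) (hn : 1 < n) :
    ¬ ∃ x : ℝ, Real.cos x ≠ 0 ∧ Real.cos (n * x) ≠ 0 ∧ Real.cos ((n + 1) * x) ≠ 0 ∧
      Real.tan x ≠ 0 ∧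
      Real.tan (n * x) = n * Real.tan x ∧
      Real.tan ((n + 1) * x) = (n + 1) * Real.tan x := by
  rintro ⟨x, hc, hcn, hcn1, ht, h1, h2⟩
  have hs : Real.sin x ≠ 0 := by
    intro h
    exact ht (by simp [Real.tan_eq_sin_div_cos, h])
  have hx1 : ((n : ℝ) + 1) * x = n * x + x := by ring
  rw [Real.tan_eq_sin_div_cos, Real.tan_eq_sin_div_cos] at h1
  rw [Real.tan_eq_sin_div_cos, Real.tan_eq_sin_div_cos, hx1, Real.sin_add, Real.cos_add] at h2
  rw [hx1, Real.cos_add] at hcn1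
  have h1' : Real.sin (n * x) * Real.cos x = n * Real.sin x * Real.cos (n * x) := by
    field_simp at h1
    linarith [h1]
  have h2' : (Real.sin (n * x) * Real.cos x + Real.cos (n * x) * Real.sin x) * Real.cos x
      = ((n : ℝ) + 1) * Real.sin x * (Real.cos (n * x) * Real.cos x - Real.sin (n * x) * Real.sin x) := by
    field_simp at h2
    have hcn1' : Real.cos x * Real.cos (n * x) - Real.sin (n * x) * Real.sin x ≠ 0 := by
      rwa [mul_comm (Real.cos x)]
    rw [div_eq_iff hcn1'] at h2
    linarith [h2]
  have key : (n : ℝ) * (n + 1) * Real.sin x ^ 3 * Real.cos (n * x) = 0 := by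
    linear_combination Real.cos x * h2' - (Real.cos x ^ 2 + ((n : ℝ) + 1) * Real.sin x ^ 2) * h1'
  have hn0 : (n : ℝ) ≠ 0 := by positivity
  have : Real.sin x ^ 3 * Real.cos (n * x) = 0 := by
    have hn1 : (n : ℝ) + 1 ≠ 0 := by positivity
    exact (mul_eq_zero.mp (by linear_combination key : ((n : ℝ) * (n + 1)) * (Real.sin x ^ 3 * Real.cos (n * x)) = 0)).resolve_left (mul_ne_zero hn0 hn1)

  rcases mul_eq_zero.mp this with h | h
  · exact hs (pow_eq_zero_iff (by norm_num) |>.mp h)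
  · exact hcn h
end

section
/- Let n > 1 be an integer. The system tan(nx) = n·tan(x) and tan(2nx) = 2n·tan(x) has no real solution x with tan(x) ≠ 0 (assuming cos x, cos(nx), cos(2nx) are all nonzero). -/
open Real

theorem stmt_17 (n : ℕ) (hn : 1 < n) :
    ¬ ∃ x : ℝ, Real.cos x ≠ 0 ∧ Real.cos (n * x) ≠ 0 ∧ Real.cos (2 * n * x) ≠ 0 ∧
      Real.tan x ≠ 0 ∧
      Real.tan (n * x) = n * Real.tan x ∧
      Real.tan (2 * n * x) = 2 * n * Real.tan x := by
  rintro ⟨x, hx, hnx, h2nx, ht, h1, h2⟩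
  have hn0 : (n : ℝ) ≠ 0 := by positivity
  rw [show (2 * (n:ℝ) * x) = 2 * ((n:ℝ) * x) by ring, Real.tan_two_mul, h1] at h2
  set t := Real.tan x with htdef
  have hnt : (n:ℝ) * t ≠ 0 := mul_ne_zero hn0 ht
  rcases eq_or_ne (1 - ((n:ℝ) * t)^2) 0 with h | h
  · rw [h, div_zero] at h2
    exact ht ((mul_eq_zero.1 (by linarith : (n:ℝ) * t = 0)).resolve_left hn0)
  · rw [div_eq_iff h] at h2
    have h3 : ((n:ℝ) * t)^3 = 0 := by linear_combination h2 / 2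
    exact hnt (pow_eq_zero_iff three_ne_zero |>.1 h3)
end
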